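/- Choice overload under the TLM: there exist instances where adding a new alternative strictly decreases the captured revenue. Concretely, with two alternatives of attraction 2, outside option attraction 4, γ = 0.5, and demand 100 (two zones of 50), the revenue is 50; after adding a third alternative of attraction 3.1 (which dominates both since 3.1 > 1.5·2), the revenue becomes 100·(3.1/7.1) = 3100/71 < 50. -/
import Mathlib


open Classical in
/-- Choice overload under the TLM: in the concrete instance with two alternatives of
attraction 2, outside option 4, `γ = 0.5` and total demand 100, adding a third
alternative of attraction 3.1 strictly decreases revenue from 50 to 3100/71. -/
theorem tlm_choice_overload :
    ∀ (a : Fin 3 → ℝ), a 0 = 2 → a 1 = 2 → a 2 = 3.1 →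
    ∀ (γ a0 : ℝ), γ = 0.5 → a0 = 4 →
    let c : Finset (Fin 3) → Finset (Fin 3) :=
      fun S => S.filter (fun j => ∀ k ∈ S, a k ≤ (1 + γ) * a j)
    let R : Finset (Fin 3) → ℝ :=
      fun S => 100 * (∑ l ∈ c S, a l) / ((∑ l ∈ c S, a l) + a0)
    R {0, 1} = 50 ∧ R {0, 1, 2} = 3100 / 71 ∧ R {0, 1, 2} < R {0, 1} := by
  intro a h0 h1 h2 γ a0 hγ ha0 c R
  have hc1 : c {0, 1} = {0, 1} := by
    simp only [c, Finset.filter_insert, Finset.filter_singleton, Finset.mem_insert,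
      Finset.mem_singleton, forall_eq_or_imp, forall_eq, h0, h1, hγ]
    norm_num
  have hc2 : c {0, 1, 2} = {2} := by
    simp only [c, Finset.filter_insert, Finset.filter_singleton, Finset.mem_insert,
      Finset.mem_singleton, forall_eq_or_imp, forall_eq, h0, h1, h2, hγ]
    norm_num
  have hR1 : R {0, 1} = 50 := by
    simp only [R, hc1, Finset.sum_pair (show (0:Fin 3) ≠ 1 by decide), Finset.sum_singleton, h0, h1, ha0]
    norm_num
  have hR2 : R {0, 1, 2} = 3100 / 71 := by
    simp only [R, hc2, Finset.sum_singleton, h2, ha0]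
    norm_num
  refine ⟨hR1, hR2, ?_⟩
  rw [hR1, hR2]; norm_num
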